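/- arXiv:2010.09505 — 2 statements merged into one kernel-verified Lean document; each statement's English description precedes it below -/
import Mathlib

section
/- For q ≥ 1, the generating function for the total number of 0s over all q-decreasing words of length n is P_{q,0}(x) = x(1 − x^q) / (1 − 2x + x^{q+2})^2. -/
/-- A binary word (`List Bool`, `true` = bit 1) is `q`-decreasing if it is a
concatenation `1^{b0} ++ 0^{a1}1^{b1} ++ ... ++ 0^{am}1^{bm}` where every
block `0^a 1^b` with `a > 0` satisfies `q*a > b` (equivalently, every maximal
factor of the form `0^a 1^b` with `a > 0` satisfies `q*a > b`). -/
inductive QDecreasing (q : ℕ) : List Bool → Prop where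
  | ones (m : ℕ) : QDecreasing q (List.replicate m true)
  | snoc (w : List Bool) (a b : ℕ) (ha : 0 < a) (hb : b < q * a)
      (hw : QDecreasing q w) :
      QDecreasing q (w ++ List.replicate a false ++ List.replicate b true)

/-- The popularity of the bit `b` among `q`-decreasing words of length `n`:
the number of pairs (word, position) where the word is a `q`-decreasing word of
length `n` carrying the bit `b` at the given position. -/
noncomputable def qdecPopularity (q : ℕ) (b : Bool) (n : ℕ) : ℕ :=
  Nat.card {p : List Bool × ℕ //
    p.1.length = n ∧ QDecreasing q p.1 ∧ p.1[p.2]? = some b}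


/-!
The popularity of `0` is the generating function of the `q`-decreasing words in which each word
is weighted by its number of `0`s. Three decompositions, each a disjoint union of injective images,
give linear equations between the generating functions of the `q`-decreasing words, of those not
ending in `0`, and of the saturated ones (those that stop being `q`-decreasing when a `1` is
appended), once with weight `1` and once with the number of `0`s as weight:
a `q`-decreasing word either does not end in `0` or is a `q`-decreasing word followed by `0`;
a nonempty one not ending in `0` is a non-saturated word followed by `1`; and the saturated words
are the `x 0^a 1^(q a - 1)` with `x` `q`-decreasing not ending in `0` and `a ≥ 1`, so each is
either `x 0 1^(q - 1)` or arises from a saturated word `q + 1` letters shorter by raising `a`.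
Solving these linear systems gives the formula.
-/

open PowerSeries
open List (replicate)

section Lists

variable {α : Type*}

theorem List.replicate_append_inj {c : α} {k k' : ℕ} {l l' : List α} (hl : l.head? ≠ some c)
    (hl' : l'.head? ≠ some c) (h : replicate k c ++ l = replicate k' c ++ l') :
    k = k' ∧ l = l' := by
  induction k generalizing k' with
  | zero =>
    cases k' with
    | zero => exact ⟨rfl, h⟩
    | succ k' =>
      subst h
      simp [List.replicate_succ] at hl
  | succ k ih =>
    cases k' with
    | zero =>
      subst h
      simp [List.replicate_succ] at hl'
    | succ k' =>
      simp only [List.replicate_succ, List.cons_append, List.cons.injEq, true_and] at h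
      exact (ih h).imp_left (congrArg (· + 1))

theorem List.append_replicate_inj {c : α} {k k' : ℕ} {l l' : List α}
    (hl : l.getLast? ≠ some c) (hl' : l'.getLast? ≠ some c)
    (h : l ++ replicate k c = l' ++ replicate k' c) : l = l' ∧ k = k' := by
  rw [← List.head?_reverse] at hl hl'
  have := congrArg List.reverse h
  simp only [List.reverse_append, List.reverse_replicate] at this
  exact (List.replicate_append_inj hl hl' this).symm.imp_left List.reverse_inj.1

theorem List.exists_eq_append_replicate (w : List α) (c : α) :
    ∃ x k, x.getLast? ≠ some c ∧ w = x ++ replicate k c := by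
  induction w using List.reverseRecOn with
  | nil => exact ⟨[], 0, by simp, rfl⟩
  | append_singleton w d ih =>
    by_cases hd : d = c
    · obtain ⟨x, k, hx, rfl⟩ := ih
      exact ⟨x, k + 1, hx, by simp [hd, List.replicate_succ']⟩
    · exact ⟨w ++ [d], 0, by simpa using hd, by simp⟩

theorem List.rdropWhile_append_replicate {p : α → Bool} {c d : α} (hc : p c) (hd : ¬p d)
    (l : List α) (b : ℕ) : (l ++ [d] ++ replicate b c).rdropWhile p = l ++ [d] := by
  induction b with
  | zero => simpa using List.rdropWhile_concat_neg _ l _ hd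
  | succ b ih =>
    rw [List.replicate_succ', ← List.append_assoc, List.rdropWhile_concat_pos _ _ _ hc, ih]

theorem List.rtakeWhile_append_replicate {p : α → Bool} {c d : α} (hc : p c) (hd : ¬p d)
    (l : List α) (b : ℕ) : (l ++ [d] ++ replicate b c).rtakeWhile p = replicate b c := by
  induction b with
  | zero => simpa using List.rtakeWhile_concat_neg _ l _ hd
  | succ b ih =>
    rw [List.replicate_succ', ← List.append_assoc, List.rtakeWhile_concat_pos _ _ _ hc, ih]

theorem natCard_getElem?_eq_some [DecidableEq α] (l : List α) (a : α) :
    Nat.card {i : ℕ // l[i]? = some a} = l.count a := by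
  let e : {i : ℕ // l[i]? = some a} ≃ {i : Fin l.length // l[i] = a} :=
    { toFun := fun i => ⟨⟨i, (List.getElem?_eq_some_iff.1 i.2).1⟩,
        (List.getElem?_eq_some_iff.1 i.2).2⟩
      invFun := fun i => ⟨i, List.getElem?_eq_some_iff.2 ⟨i.1.2, i.2⟩⟩
      left_inv := fun _ => rfl
      right_inv := fun _ => rfl }
  rw [Nat.card_congr e, Nat.card_eq_fintype_card, Fintype.card_subtype]
  exact Fin.card_filter_univ_eq_vector_get_eq_count a ⟨l, rfl⟩

theorem natCard_positions_eq_finsum_count [DecidableEq α] {s : Set (List α)} (hs : s.Finite)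
    (a : α) :
    Nat.card {p : List α × ℕ // p.1 ∈ s ∧ p.1[p.2]? = some a} =
      ∑ᶠ w ∈ s, w.count a := by
  have := hs.fintype
  have (w : List α) : Finite {i : ℕ // w[i]? = some a} :=
    ((Set.finite_Iio w.length).subset fun _ hi => (List.getElem?_eq_some_iff.1 hi).1).to_subtype
  let e : {p : List α × ℕ // p.1 ∈ s ∧ p.1[p.2]? = some a} ≃
      Σ w : s, {i : ℕ // w.1[i]? = some a} :=
    { toFun := fun p => ⟨⟨p.1.1, p.2.1⟩, ⟨p.1.2, p.2.2⟩⟩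
      invFun := fun p => ⟨(p.1.1, p.2.1), p.1.2, p.2.2⟩
      left_inv := fun _ => rfl
      right_inv := fun _ => rfl }
  rw [Nat.card_congr e, Nat.card_sigma, ← finsum_set_coe_eq_finsum_mem, finsum_eq_sum_of_fintype]
  simp only [natCard_getElem?_eq_some]

end Lists

theorem lastBlock_inj {x x' : List Bool} {a a' b b' : ℕ} (hx : x.getLast? ≠ some false)
    (hx' : x'.getLast? ≠ some false) (ha : 0 < a) (ha' : 0 < a')
    (h : x ++ replicate a false ++ replicate b true =
      x' ++ replicate a' false ++ replicate b' true) :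
    x = x' ∧ a = a' ∧ b = b' := by
  have hlast {y : List Bool} {k : ℕ} (hk : 0 < k) :
      (y ++ replicate k false).getLast? ≠ some true := by
    simp [List.getLast?_append, List.getLast?_replicate, hk.ne']
  obtain ⟨hxa, rfl⟩ := List.append_replicate_inj (hlast ha) (hlast ha') h
  obtain ⟨rfl, rfl⟩ := List.append_replicate_inj hx hx' hxa
  exact ⟨rfl, rfl, rfl⟩

section WordGF

variable {α : Type*}

noncomputable def wordGF (s : Set (List α)) (wt : List α → ℤ) : ℤ⟦X⟧ :=
  mk fun n => ∑ᶠ w ∈ s ∩ {w | w.length = n}, wt w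

theorem wordGF_image {s : Set (List α)} {g : List α → List α} {k : ℕ} (hg : s.InjOn g)
    (hlen : ∀ w ∈ s, (g w).length = w.length + k) (wt : List α → ℤ) :
    wordGF (g '' s) wt = X ^ k * wordGF s (wt ∘ g) := by
  ext n
  have himage : g '' s ∩ {w | w.length = n} = g '' (s ∩ {v | v.length + k = n}) := by
    ext w
    simp only [Set.mem_inter_iff, Set.mem_image, Set.mem_ofPred_eq]
    constructor
    · rintro ⟨⟨v, hv, rfl⟩, hn⟩
      exact ⟨v, ⟨hv, hlen v hv ▸ hn⟩, rfl⟩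
    · rintro ⟨v, ⟨hv, hn⟩, rfl⟩
      exact ⟨⟨v, hv, rfl⟩, hlen v hv ▸ hn⟩
  rw [wordGF, coeff_mk, himage, finsum_mem_image (hg.mono Set.inter_subset_left),
    coeff_X_pow_mul', wordGF, coeff_mk]
  split_ifs with hk
  · have hlen' : {v : List α | v.length + k = n} = {v | v.length = n - k} := by
      ext v; simp only [Set.mem_ofPred_eq]; omega
    rw [hlen']
    rfl
  · have hempty : s ∩ {v | v.length + k = n} = ∅ :=
      Set.eq_empty_of_forall_notMem fun v hv => hk (hv.2 ▸ Nat.le_add_left k _)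
    rw [hempty, finsum_mem_empty]

theorem wordGF_nil (wt : List α → ℤ) : wordGF {[]} wt = C (wt []) := by
  ext n
  rw [wordGF, coeff_mk, coeff_C]
  split_ifs with hn
  · have hnil : {([] : List α)} ∩ {w | w.length = n} = {[]} := by
      simp [hn]
    rw [hnil, finsum_mem_singleton]
  · have hempty : {([] : List α)} ∩ {w | w.length = n} = ∅ :=
      Set.eq_empty_of_forall_notMem fun w hw => hn (hw.1 ▸ hw.2).symm
    rw [hempty, finsum_mem_empty]

variable [Finite α]

theorem finite_inter_setOf_length_eq (s : Set (List α)) (n : ℕ) :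
    (s ∩ {w | w.length = n}).Finite :=
  (List.finite_length_eq α n).subset Set.inter_subset_right

theorem wordGF_union {s t : Set (List α)} (hst : Disjoint s t) (wt : List α → ℤ) :
    wordGF (s ∪ t) wt = wordGF s wt + wordGF t wt := by
  ext n
  rw [map_add, wordGF, wordGF, wordGF, coeff_mk, coeff_mk, coeff_mk, Set.union_inter_distrib_right,
    finsum_mem_union (hst.mono Set.inter_subset_left Set.inter_subset_left)
      (finite_inter_setOf_length_eq s n) (finite_inter_setOf_length_eq t n)]

theorem wordGF_add (s : Set (List α)) (wt wt' : List α → ℤ) :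
    wordGF s (wt + wt') = wordGF s wt + wordGF s wt' := by
  ext n
  rw [map_add, wordGF, wordGF, wordGF, coeff_mk, coeff_mk, coeff_mk]
  exact finsum_mem_add_distrib (finite_inter_setOf_length_eq s n)

end WordGF

section QDecreasing

variable {q : ℕ}

theorem QDecreasing.nil : QDecreasing q [] := .ones 0

theorem QDecreasing.append_replicate_false (hq : 0 < q) {w : List Bool} (hw : QDecreasing q w)
    (k : ℕ) : QDecreasing q (w ++ replicate k false) := by
  rcases k.eq_zero_or_pos with rfl | hk
  · simpa using hw
  · simpa using hw.snoc w k 0 hk (Nat.mul_pos hq hk)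

theorem qDecreasing_append_false_iff (hq : 0 < q) {w : List Bool} :
    QDecreasing q (w ++ [false]) ↔ QDecreasing q w := by
  refine ⟨fun h => ?_, fun hw => hw.append_replicate_false hq 1⟩
  generalize hv : w ++ [false] = v at h
  cases h with
  | ones m =>
    have : false ∈ replicate m true := hv ▸ by simp
    simp [List.mem_replicate] at this
  | snoc u a b ha hb hu =>
    obtain _ | b := b
    · obtain _ | a := a
      · omega
      rw [List.replicate_succ', ← List.append_assoc] at hv
      simp only [List.replicate_zero, List.append_nil, List.append_cancel_right_eq] at hv
      exact hv ▸ hu.append_replicate_false hq a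
    · have := congrArg List.getLast? hv
      simp [List.replicate_succ'] at this

theorem qDecreasing_append_replicate_false_iff (hq : 0 < q) {w : List Bool} {k : ℕ} :
    QDecreasing q (w ++ replicate k false) ↔ QDecreasing q w := by
  induction k with
  | zero => simp
  | succ k ih =>
    rw [List.replicate_succ', ← List.append_assoc, qDecreasing_append_false_iff hq, ih]

theorem QDecreasing.of_append_true {w : List Bool} (h : QDecreasing q (w ++ [true])) :
    QDecreasing q w := by
  generalize hv : w ++ [true] = v at h
  cases h with
  | ones m =>
    obtain _ | m := m
    · simp at hv
    · rw [List.replicate_succ', List.append_cancel_right_eq] at hv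
      exact hv ▸ .ones m
  | snoc u a b ha hb hu =>
    obtain _ | b := b
    · have := congrArg List.getLast? hv
      obtain _ | a := a
      · omega
      simp [List.replicate_succ'] at this
    · rw [List.replicate_succ', ← List.append_assoc, List.append_cancel_right_eq] at hv
      exact hv ▸ hu.snoc u a b ha (by omega)

theorem QDecreasing.lastBlock_lt_mul {x : List Bool} {a b : ℕ} (hx : x.getLast? ≠ some false)
    (ha : 0 < a) (h : QDecreasing q (x ++ replicate a false ++ replicate b true)) : b < q * a := by
  generalize hv : x ++ replicate a false ++ replicate b true = v at h
  cases h with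
  | ones m =>
    have : false ∈ replicate m true := hv ▸ by simp [ha.ne']
    simp [List.mem_replicate] at this
  | snoc u a' b' ha' hb' hu =>
    obtain ⟨u, k, hu', rfl⟩ := u.exists_eq_append_replicate false
    rw [List.append_assoc u, ← List.replicate_add] at hv
    obtain ⟨-, rfl, rfl⟩ := lastBlock_inj hx hu' ha (by omega) hv
    exact hb'.trans_le (Nat.mul_le_mul_left q (by omega))

def Saturated (q : ℕ) (w : List Bool) : Prop :=
  QDecreasing q w ∧ ¬QDecreasing q (w ++ [true])

def saturatedWord (q : ℕ) (x : List Bool) (a : ℕ) : List Bool :=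
  x ++ replicate a false ++ replicate (q * a - 1) true

theorem saturated_iff (hq : 0 < q) {w : List Bool} :
    Saturated q w ↔ ∃ x a, QDecreasing q x ∧ x.getLast? ≠ some false ∧ 0 < a ∧
      w = saturatedWord q x a := by
  constructor
  · rintro ⟨hw, hw'⟩
    cases hw with
    | ones m =>
      exact absurd (by simpa [List.replicate_succ'] using QDecreasing.ones (q := q) (m + 1)) hw'
    | snoc u a b ha hb hu =>
      obtain ⟨x, k, hx, rfl⟩ := u.exists_eq_append_replicate false
      rw [List.append_assoc x, ← List.replicate_add] at hw' ⊢
      rw [qDecreasing_append_replicate_false_iff hq] at hu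
      -- a block that could take one more `1` would contradict saturation; this forces `k = 0`
      have hfull : ¬b + 1 < q * (k + a) := fun hlt => hw' <| by
        simpa [List.replicate_succ'] using hu.snoc x (k + a) (b + 1) (by omega) hlt
      have hk : k = 0 := by
        by_contra hk
        have := Nat.mul_le_mul_left q (show a + 1 ≤ k + a by omega)
        rw [Nat.mul_succ] at this
        omega
      subst hk
      simp only [Nat.zero_add] at hfull ⊢
      exact ⟨x, a, hu, hx, ha, by rw [saturatedWord]; congr; omega⟩
  · rintro ⟨x, a, hx, hx', ha, rfl⟩
    have hqa : 0 < q * a := Nat.mul_pos hq ha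
    refine ⟨hx.snoc x a _ ha (by omega), fun h => ?_⟩
    rw [saturatedWord, List.append_assoc _ (replicate _ true), ← List.replicate_succ',
      Nat.sub_add_cancel hqa] at h
    exact (h.lastBlock_lt_mul hx' ha).false

end QDecreasing

section Decomposition

variable {q : ℕ}

def growLastBlock (q : ℕ) (w : List Bool) : List Bool :=
  w.rdropWhile id ++ false :: (w.rtakeWhile id ++ replicate q true)

theorem growLastBlock_saturatedWord (hq : 0 < q) {x : List Bool} {a : ℕ} (ha : 0 < a) :
    growLastBlock q (saturatedWord q x a) = saturatedWord q x (a + 1) := by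
  obtain _ | a := a
  · omega
  have hones : q * (a + 1 + 1) - 1 = q * (a + 1) - 1 + q := by
    have := Nat.mul_pos hq ha
    rw [Nat.mul_succ q (a + 1)]
    omega
  rw [saturatedWord, List.replicate_succ', ← List.append_assoc, growLastBlock,
    List.rdropWhile_append_replicate (p := id) rfl (by simp),
    List.rtakeWhile_append_replicate (p := id) rfl (by simp), saturatedWord, hones,
    List.replicate_add]
  simp [List.replicate_succ']

theorem count_false_growLastBlock (q : ℕ) (w : List Bool) :
    (growLastBlock q w).count false = w.count false + 1 := by
  conv_rhs => rw [← List.rdropWhile_append_rtakeWhile (p := id) (l := w), List.count_append]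
  simp only [growLastBlock, List.count_append, List.count_cons, List.count_replicate, BEq.rfl,
    beq_false, Bool.not_true, Bool.false_eq_true, ↓reduceIte, add_zero]
  omega

theorem length_growLastBlock (q : ℕ) (w : List Bool) :
    (growLastBlock q w).length = w.length + (q + 1) := by
  conv_rhs => rw [← List.rdropWhile_append_rtakeWhile (p := id) (l := w), List.length_append]
  simp only [growLastBlock, List.length_append, List.length_cons, List.length_replicate]
  omega

theorem count_false_saturatedWord (q : ℕ) (x : List Bool) (a : ℕ) :
    (saturatedWord q x a).count false = x.count false + a := by
  simp [saturatedWord, List.count_replicate]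

theorem wordGF_setOf_qDecreasing (hq : 0 < q) (wt : List Bool → ℤ) :
    wordGF {w | QDecreasing q w} wt =
      wordGF {w | QDecreasing q w ∧ w.getLast? ≠ some false} wt +
        X * wordGF {w | QDecreasing q w} (wt ∘ (· ++ [false])) := by
  have hset : {w | QDecreasing q w} = {w | QDecreasing q w ∧ w.getLast? ≠ some false} ∪
      (· ++ [false]) '' {w | QDecreasing q w} := by
    ext w
    simp only [Set.mem_union, Set.mem_image, Set.mem_ofPred_eq]
    refine ⟨fun hw => ?_, ?_⟩
    · by_cases hlast : w.getLast? = some false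
      · obtain ⟨v, rfl⟩ := List.getLast?_eq_some_iff.1 hlast
        exact Or.inr ⟨v, (qDecreasing_append_false_iff hq).1 hw, rfl⟩
      · exact Or.inl ⟨hw, hlast⟩
    · rintro (⟨hw, -⟩ | ⟨v, hv, rfl⟩)
      · exact hw
      · exact (qDecreasing_append_false_iff hq).2 hv
  have hdisj : Disjoint {w | QDecreasing q w ∧ w.getLast? ≠ some false}
      ((· ++ [false]) '' {w | QDecreasing q w}) :=
    Set.disjoint_left.2 fun _ ⟨_, hlast⟩ ⟨_, _, hv⟩ => hlast (hv ▸ by simp)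
  conv_lhs => rw [hset]
  rw [wordGF_union hdisj, wordGF_image (k := 1) (List.append_left_injective _).injOn (by simp),
    pow_one]

theorem wordGF_setOf_qDecreasing_eq_saturated_add (wt : List Bool → ℤ) :
    wordGF {w | QDecreasing q w} wt =
      wordGF {w | Saturated q w} wt + wordGF {w | QDecreasing q (w ++ [true])} wt := by
  have hset :
      {w | QDecreasing q w} = {w | Saturated q w} ∪ {w | QDecreasing q (w ++ [true])} := by
    ext w
    simp only [Set.mem_union, Set.mem_ofPred_eq, Saturated]
    exact ⟨fun hw => (em (QDecreasing q (w ++ [true]))).symm.imp_left fun h => ⟨hw, h⟩,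
      fun h => h.elim And.left (·.of_append_true)⟩
  rw [hset, wordGF_union (Set.disjoint_left.2 fun _ hw => hw.2)]

theorem wordGF_setOf_getLast_ne_false (wt : List Bool → ℤ) :
    wordGF {w | QDecreasing q w ∧ w.getLast? ≠ some false} wt =
      C (wt []) + X * (wordGF {w | QDecreasing q w} (wt ∘ (· ++ [true])) -
        wordGF {w | Saturated q w} (wt ∘ (· ++ [true]))) := by
  have hset : {w | QDecreasing q w ∧ w.getLast? ≠ some false} =
      {[]} ∪ (· ++ [true]) '' {w | QDecreasing q (w ++ [true])} := by
    ext w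
    simp only [Set.mem_union, Set.mem_image, Set.mem_ofPred_eq, Set.mem_singleton_iff]
    refine ⟨fun ⟨hw, hlast⟩ => ?_, ?_⟩
    · obtain rfl | ⟨v, _ | _, rfl⟩ := w.eq_nil_or_concat'
      · exact Or.inl rfl
      · simp at hlast
      · exact Or.inr ⟨v, hw, rfl⟩
    · rintro (rfl | ⟨v, hv, rfl⟩)
      · exact ⟨.nil, by simp⟩
      · exact ⟨hv, by simp⟩
  have hdisj :
      Disjoint {([] : List Bool)} ((· ++ [true]) '' {w | QDecreasing q (w ++ [true])}) :=
    Set.disjoint_singleton_left.2 fun ⟨_, _, hv⟩ => by simp at hv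
  rw [hset, wordGF_union hdisj, wordGF_nil,
    wordGF_image (k := 1) (List.append_left_injective _).injOn (by simp), pow_one,
    wordGF_setOf_qDecreasing_eq_saturated_add, add_sub_cancel_left]

theorem wordGF_setOf_saturated (hq : 0 < q) (wt : List Bool → ℤ) :
    wordGF {w | Saturated q w} wt =
      X ^ q * wordGF {w | QDecreasing q w ∧ w.getLast? ≠ some false}
          (wt ∘ (saturatedWord q · 1)) +
        X ^ (q + 1) * wordGF {w | Saturated q w} (wt ∘ growLastBlock q) := by
  have hset : {w | Saturated q w} =
      (saturatedWord q · 1) '' {w | QDecreasing q w ∧ w.getLast? ≠ some false} ∪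
        growLastBlock q '' {w | Saturated q w} := by
    ext w
    simp only [Set.mem_union, Set.mem_image, Set.mem_ofPred_eq]
    rw [saturated_iff hq]
    constructor
    · rintro ⟨x, _ | _ | a, hx, hx', ha, rfl⟩
      · omega
      · exact Or.inl ⟨x, ⟨hx, hx'⟩, rfl⟩
      · have hsat : Saturated q (saturatedWord q x (a + 1)) :=
          (saturated_iff hq).2 ⟨x, a + 1, hx, hx', by omega, rfl⟩
        exact Or.inr ⟨_, hsat, growLastBlock_saturatedWord hq (by omega)⟩
    · rintro (⟨x, ⟨hx, hx'⟩, rfl⟩ | ⟨v, hv, rfl⟩)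
      · exact ⟨x, 1, hx, hx', one_pos, rfl⟩
      · obtain ⟨x, a, hx, hx', ha, rfl⟩ := (saturated_iff hq).1 hv
        exact ⟨x, a + 1, hx, hx', by omega, growLastBlock_saturatedWord hq ha⟩
  have hdisj : Disjoint
      ((saturatedWord q · 1) '' {w | QDecreasing q w ∧ w.getLast? ≠ some false})
      (growLastBlock q '' {w | Saturated q w}) := by
    refine Set.disjoint_left.2 ?_
    rintro _ ⟨x, ⟨-, hx⟩, rfl⟩ ⟨v, hv, hvx⟩
    obtain ⟨y, a, -, hy, ha, rfl⟩ := (saturated_iff hq).1 hv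
    rw [growLastBlock_saturatedWord hq ha] at hvx
    have := (lastBlock_inj hy hx (Nat.succ_pos a) one_pos hvx).2.1
    omega
  have hinj₁ : {w | QDecreasing q w ∧ w.getLast? ≠ some false}.InjOn (saturatedWord q · 1) :=
    fun x hx y hy hxy => (lastBlock_inj hx.2 hy.2 one_pos one_pos hxy).1
  have hinj₂ : {w | Saturated q w}.InjOn (growLastBlock q) := by
    intro v hv v' hv' hvv'
    obtain ⟨x, a, -, hx, ha, rfl⟩ := (saturated_iff hq).1 hv
    obtain ⟨x', a', -, hx', ha', rfl⟩ := (saturated_iff hq).1 hv'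
    rw [growLastBlock_saturatedWord hq ha, growLastBlock_saturatedWord hq ha'] at hvv'
    obtain ⟨rfl, haa', -⟩ := lastBlock_inj hx hx' (Nat.succ_pos a) (Nat.succ_pos a') hvv'
    obtain rfl := Nat.succ_injective haa'
    rfl
  conv_lhs => rw [hset]
  rw [wordGF_union hdisj,
    wordGF_image (k := q) hinj₁ (fun x _ => by
      simp only [saturatedWord, List.length_append, List.length_replicate, mul_one]; omega),
    wordGF_image hinj₂ (fun w _ => length_growLastBlock q w)]

theorem mk_qdecPopularity_eq_wordGF (q : ℕ) (b : Bool) :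
    mk (fun n => (qdecPopularity q b n : ℤ)) =
      wordGF {w | QDecreasing q w} (fun w => w.count b) := by
  ext n
  have hs := finite_inter_setOf_length_eq {w | QDecreasing q w} n
  rw [coeff_mk, wordGF, coeff_mk, qdecPopularity, ← Nat.cast_finsum_mem hs,
    ← natCard_positions_eq_finsum_count hs]
  congr 1
  refine Nat.card_congr (Equiv.subtypeEquivRight fun p => ?_)
  simp only [Set.mem_inter_iff, Set.mem_ofPred_eq]
  tauto

/-- `F`, `U`, `S` stand for the generating functions of the `q`-decreasing words, of those not
ending in `0` and of the saturated ones; `P`, `V`, `T` for the same classes weighted by the number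
of `0`s. -/
theorem mul_sq_eq_of_decomposition {R : Type*} [CommRing R] [IsDomain R] {x : R} {q : ℕ}
    {F U S P V T : R} (hW : 1 - x ^ (q + 1) ≠ 0)
    (hF : F = U + x * F) (hU : U = 1 + x * (F - S)) (hS : S = x ^ q * U + x ^ (q + 1) * S)
    (hP : P = V + x * (P + F)) (hV : V = x * (P - T))
    (hT : T = x ^ q * (V + U) + x ^ (q + 1) * (T + S)) :
    P * (1 - 2 * x + x ^ (q + 2)) ^ 2 = x * (1 - x ^ q) := by
  have hF' : F * (1 - 2 * x + x ^ (q + 2)) = 1 - x ^ (q + 1) := by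
    linear_combination (1 - x ^ (q + 1)) * (hF + hU) - x * (hS - x ^ q * hF)
  have hS' : S * (1 - 2 * x + x ^ (q + 2)) = x ^ q * (1 - x) := by
    refine mul_left_cancel₀ hW ?_
    linear_combination (1 - 2 * x + x ^ (q + 2)) * (hS - x ^ q * hF) + x ^ q * (1 - x) * hF'
  have hP' : P * (1 - 2 * x + x ^ (q + 2)) =
      x * F * (1 - x ^ (q + 1)) - x ^ (q + 2) * S - x ^ (q + 1) * (1 - 2 * x) * F := by
    linear_combination (1 - x ^ (q + 1)) * (hP + hV) - x * (hT - x ^ q * hP - x ^ q * hF)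
  linear_combination (1 - 2 * x + x ^ (q + 2)) * hP'
    + (x * (1 - x ^ (q + 1)) - x ^ (q + 1) * (1 - 2 * x)) * hF' - x ^ (q + 2) * hS'

theorem qdecreasing_popularity_zero_gf (q : ℕ) (hq : 1 ≤ q) :
    PowerSeries.mk (fun n => (qdecPopularity q false n : ℤ)) *
      (1 - 2 * PowerSeries.X + PowerSeries.X ^ (q + 2)) ^ 2 =
    PowerSeries.X * (1 - PowerSeries.X ^ q) := by
  let z : List Bool → ℤ := fun w => w.count false
  have hF := wordGF_setOf_qDecreasing hq 1
  have hU := wordGF_setOf_getLast_ne_false (q := q) 1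
  have hS := wordGF_setOf_saturated hq 1
  have hP := wordGF_setOf_qDecreasing hq z
  have hV := wordGF_setOf_getLast_ne_false (q := q) z
  have hT := wordGF_setOf_saturated hq z
  rw [show z ∘ (· ++ [false]) = z + 1 from funext fun w => by simp [z], wordGF_add] at hP
  rw [show z ∘ (· ++ [true]) = z from funext fun w => by simp [z]] at hV
  rw [show z ∘ (saturatedWord q · 1) = z + 1 from
      funext fun w => by simp [z, count_false_saturatedWord],
    show z ∘ growLastBlock q = z + 1 from funext fun w => by simp [z, count_false_growLastBlock],
    wordGF_add, wordGF_add] at hT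
  simp only [Pi.one_apply, map_one] at hU
  simp only [z, List.count_nil, Nat.cast_zero, map_zero, zero_add] at hV
  have hW : (1 - X ^ (q + 1) : ℤ⟦X⟧) ≠ 0 := fun h => by simpa using congrArg constantCoeff h
  rw [mk_qdecPopularity_eq_wordGF]
  exact mul_sq_eq_of_decomposition hW hF hU hS hP hV hT
end Decomposition
end

section
/- For q ≥ 1, the generating function for the total number of 1s over all q-decreasing words of length n is P_{q,1}(x) = x(1 − q x^q + q x^{q+1} − 2 x^{q+1} + x^{2q+2}) / (1 − 2x + x^{q+2})^2. -/
/-!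
Call a `q`-decreasing word *blocked* when appending a `1` destroys the property; these are the
words ending in a maximal factor `0^a 1^(qa-1)`. A `q`-decreasing word of length `n + 1` is `w0`
or `w1` for a `q`-decreasing `w` of length `n`, where `w1` is allowed unless `w` is blocked.
Blocked words of length `n + q + 1` are in bijection with all `q`-decreasing words of length `n`,
each gaining exactly `q` ones. For the series `F`, `B` counting all and blocked words and `P`, `PB`
counting their ones, this gives the linear system
`F + X B = 1 + 2 X F`, `B = X^q + X^(q+1) F`, `P + X (PB + B) = X (2 P + F)`,
`PB = (q - 1) X^q + X^(q+1) (P + q F)`, whose solution is the claimed rational function.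
-/

open List

theorem List.append_replicate_inj_s12 {α : Type*} {c : α} {x y : List α} {m n : ℕ}
    (hx : x.getLast? ≠ some c) (hy : y.getLast? ≠ some c)
    (h : x ++ replicate m c = y ++ replicate n c) : x = y ∧ m = n := by
  have last_eq {z : List α} {k : ℕ} : (z ++ replicate (k + 1) c).getLast? = some c := by
    simp [getLast?_append, getLast?_replicate]
  induction m generalizing n with
  | zero =>
    cases n with
    | zero => simpa using h
    | succ n => simp only [replicate_zero, append_nil] at h; exact absurd (h ▸ last_eq) hx
  | succ m ih =>
    cases n with
    | zero => simp only [replicate_zero, append_nil] at h; exact absurd (h ▸ last_eq) hy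
    | succ n =>
      rw [replicate_succ', replicate_succ', ← append_assoc, ← append_assoc] at h
      obtain ⟨rfl, rfl⟩ := ih (append_inj' h rfl).1
      exact ⟨rfl, rfl⟩

theorem List.card_filter_getElem?_eq_count {α : Type*} [DecidableEq α] (l : List α) (a : α) :
    ({i ∈ Finset.range l.length | l[i]? = some a} : Finset ℕ).card = l.count a := by
  induction l with
  | nil => simp
  | cons x l ih =>
    rw [Finset.card_filter, length_cons, Finset.sum_range_succ', ← Finset.card_filter]
    simp only [getElem?_cons_succ, ih, getElem?_cons_zero, Option.some.injEq, count_cons,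
      beq_iff_eq]

def EndsInZero (w : List Bool) : Prop := w.getLast? = some false

theorem endsInZero_append_replicate_false (u : List Bool) {a : ℕ} (ha : 0 < a) :
    EndsInZero (u ++ replicate a false) := by
  obtain ⟨a, rfl⟩ := Nat.exists_eq_add_of_lt ha
  simp [EndsInZero, getLast?_append, getLast?_replicate]

theorem not_endsInZero_append_true (u : List Bool) : ¬EndsInZero (u ++ [true]) := by
  simp [EndsInZero]

theorem not_endsInZero_replicate_true (m : ℕ) : ¬EndsInZero (replicate m true) := by
  cases m <;> simp [EndsInZero, getLast?_replicate]

theorem block_inj {u u' : List Bool} {a a' b b' : ℕ} (hu : ¬EndsInZero u)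
    (hu' : ¬EndsInZero u') (ha : 0 < a) (ha' : 0 < a')
    (h : u ++ replicate a false ++ replicate b true =
      u' ++ replicate a' false ++ replicate b' true) :
    u = u' ∧ a = a' ∧ b = b' := by
  have zeros_ne {v : List Bool} {k : ℕ} (hk : 0 < k) :
      (v ++ replicate k false).getLast? ≠ some true := by
    rw [endsInZero_append_replicate_false v hk]; simp
  obtain ⟨hz, rfl⟩ := append_replicate_inj_s12 (zeros_ne ha) (zeros_ne ha') h
  obtain ⟨rfl, rfl⟩ := append_replicate_inj_s12 hu hu' hz
  exact ⟨rfl, rfl, rfl⟩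

theorem rtakeWhile_append_replicate_true {l : List Bool} (hl : EndsInZero l) (b : ℕ) :
    (l ++ replicate b true).rtakeWhile id = replicate b true := by
  induction b with
  | zero =>
    rw [← dropLast_append_getLast? false hl]
    simp [rtakeWhile_concat_neg]
  | succ b ih => rw [replicate_succ', ← append_assoc, rtakeWhile_concat_pos id _ true rfl, ih]

theorem rdropWhile_append_replicate_true {l : List Bool} (hl : EndsInZero l) (b : ℕ) :
    (l ++ replicate b true).rdropWhile id = l := by
  have h := rdropWhile_append_rtakeWhile (p := id) (l := l ++ replicate b true)
  rw [rtakeWhile_append_replicate_true hl] at h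
  exact append_cancel_right h

namespace QDecreasing

variable {q : ℕ}

theorem exists_block {w : List Bool} (h : QDecreasing q w) :
    (∃ m, w = replicate m true) ∨
      ∃ u a b, QDecreasing q u ∧ ¬EndsInZero u ∧ 0 < a ∧ b < q * a ∧
        w = u ++ replicate a false ++ replicate b true := by
  induction h with
  | ones m => exact .inl ⟨m, rfl⟩
  | snoc w a b ha hb hw ih =>
    right
    rcases ih with ⟨m, rfl⟩ | ⟨u, a', b', hu, hu0, ha', -, rfl⟩
    · exact ⟨_, a, b, .ones m, not_endsInZero_replicate_true m, ha, hb, rfl⟩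
    rcases Nat.eq_zero_or_pos b' with rfl | hb'
    · -- the new zeros extend the last run of zeros
      refine ⟨u, a' + a, b, hu, hu0, by omega, hb.trans_le (by gcongr; omega), ?_⟩
      rw [replicate_zero, append_nil, ← replicate_append_replicate, ← append_assoc]
    · obtain ⟨b', rfl⟩ := Nat.exists_eq_add_of_lt hb'
      refine ⟨_, a, b, hw, ?_, ha, hb, rfl⟩
      rw [replicate_succ', ← append_assoc]
      exact not_endsInZero_append_true _

theorem block_iff {u : List Bool} {a b : ℕ} (hu : ¬EndsInZero u) (ha : 0 < a) :
    QDecreasing q (u ++ replicate a false ++ replicate b true) ↔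
      QDecreasing q u ∧ b < q * a := by
  refine ⟨fun h => ?_, fun ⟨h, hb⟩ => .snoc u a b ha hb h⟩
  rcases h.exists_block with ⟨m, hm⟩ | ⟨u', a', b', hu', hu0', ha', hb', he⟩
  · have : false ∈ replicate m true := by
      rw [← hm]; simp [mem_replicate, ha.ne']
    simp [mem_replicate] at this
  · obtain ⟨rfl, rfl, rfl⟩ := block_inj hu hu0' ha ha' he
    exact ⟨hu', hb'⟩

theorem append_false (hq : 1 ≤ q) {w : List Bool} (h : QDecreasing q w) :
    QDecreasing q (w ++ [false]) := by
  simpa using QDecreasing.snoc w 1 0 one_pos (by omega) h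

theorem of_append_singleton (hq : 1 ≤ q) {w : List Bool} {x : Bool}
    (h : QDecreasing q (w ++ [x])) : QDecreasing q w := by
  rcases h.exists_block with ⟨m, hm⟩ | ⟨u, a, b, hu, -, ha, hb, he⟩
  · obtain ⟨m, rfl⟩ : ∃ k, m = k + 1 := Nat.exists_eq_succ_of_ne_zero (by rintro rfl; simp at hm)
    rw [replicate_succ'] at hm
    rw [(append_inj' hm rfl).1]
    exact .ones m
  rcases b with _ | b
  · obtain ⟨a, rfl⟩ := Nat.exists_eq_add_of_lt ha
    rw [replicate_zero, append_nil, replicate_succ', ← append_assoc] at he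
    rw [(append_inj' he rfl).1]
    rcases Nat.eq_zero_or_pos a with rfl | ha
    · simpa using hu
    · simpa using QDecreasing.snoc u a 0 ha (by positivity) hu
  · rw [replicate_succ', ← append_assoc] at he
    rw [(append_inj' he rfl).1]
    exact .snoc u a b ha (by omega) hu

theorem not_append_true_iff {w : List Bool} (h : QDecreasing q w) :
    ¬QDecreasing q (w ++ [true]) ↔
      ∃ u a b, QDecreasing q u ∧ ¬EndsInZero u ∧ 0 < a ∧ b + 1 = q * a ∧
        w = u ++ replicate a false ++ replicate b true := by
  have snoc_true (u : List Bool) (a b : ℕ) : u ++ replicate a false ++ replicate b true ++ [true]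
      = u ++ replicate a false ++ replicate (b + 1) true := by
    simp only [replicate_succ', append_assoc]
  constructor
  · intro hw
    rcases h.exists_block with ⟨m, rfl⟩ | ⟨u, a, b, hu, hu0, ha, hb, rfl⟩
    · exact absurd (by simpa [← replicate_succ'] using QDecreasing.ones (q := q) (m + 1)) hw
    · rw [snoc_true, block_iff hu0 ha] at hw
      have : ¬b + 1 < q * a := fun h' => hw ⟨hu, h'⟩
      exact ⟨u, a, b, hu, hu0, ha, by omega, rfl⟩
  · rintro ⟨u, a, b, -, hu0, ha, hb, rfl⟩ hw
    rw [snoc_true, block_iff hu0 ha] at hw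
    omega

end QDecreasing

open Classical in
noncomputable def qdecWords (q n : ℕ) : Finset (List Bool) :=
  {w ∈ (List.finite_length_eq Bool n).toFinset | QDecreasing q w}

open Classical in
noncomputable def blockedWords (q n : ℕ) : Finset (List Bool) :=
  {w ∈ qdecWords q n | ¬QDecreasing q (w ++ [true])}

open Classical in
/-- The bijection from `q`-decreasing words of length `n` onto blocked words of length
`n + q + 1`: an extendable word `w` goes to `w 1 0 1^(q-1)`, and the last block `0^a 1^(qa-1)`
of a blocked word is lengthened to `0^(a+1) 1^(q(a+1)-1)`. -/
noncomputable def grow (q : ℕ) (w : List Bool) : List Bool :=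
  if QDecreasing q (w ++ [true]) then w ++ [true] ++ replicate 1 false ++ replicate (q - 1) true
  else w.rdropWhile id ++ false :: (w.rtakeWhile id ++ replicate q true)

section Counting

variable {q n : ℕ} {w : List Bool}

@[simp]
theorem mem_qdecWords : w ∈ qdecWords q n ↔ w.length = n ∧ QDecreasing q w := by
  simp [qdecWords]

@[simp]
theorem mem_blockedWords :
    w ∈ blockedWords q n ↔ (w.length = n ∧ QDecreasing q w) ∧ ¬QDecreasing q (w ++ [true]) := by
  simp [blockedWords]

theorem qdecWords_zero : qdecWords q 0 = {[]} := by
  ext w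
  simp only [mem_qdecWords, length_eq_zero_iff, Finset.mem_singleton, and_iff_left_iff_imp]
  rintro rfl
  simpa using QDecreasing.ones (q := q) 0

theorem grow_of_extendable (h : QDecreasing q (w ++ [true])) :
    grow q w = w ++ [true] ++ replicate 1 false ++ replicate (q - 1) true := by
  simp [grow, h]

theorem grow_of_blocked {u : List Bool} {a b : ℕ} (ha : 0 < a)
    (h : ¬QDecreasing q (u ++ replicate a false ++ replicate b true ++ [true])) :
    grow q (u ++ replicate a false ++ replicate b true)
      = u ++ replicate (a + 1) false ++ replicate (b + q) true := by
  have hz := endsInZero_append_replicate_false u ha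
  rw [grow, if_neg h, rtakeWhile_append_replicate_true hz, rdropWhile_append_replicate_true hz]
  simp only [replicate_succ', replicate_add, append_assoc, singleton_append]

theorem count_grow (hq : 1 ≤ q) (w : List Bool) : (grow q w).count true = w.count true + q := by
  unfold grow
  split_ifs
  · simp only [count_append, count_singleton_self, count_replicate_self, replicate_one,
      count_singleton, beq_iff_eq, Bool.false_eq_true, if_false]
    omega
  · have h := congrArg (count true) (rdropWhile_append_rtakeWhile (p := id) (l := w))
    rw [count_append] at h
    simp only [count_append, ne_eq, Bool.false_eq_true, not_false_eq_true, count_cons_of_ne,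
      count_replicate_self]
    omega

theorem mem_blockedWords_iff :
    w ∈ blockedWords q n ↔ ∃ u a b, QDecreasing q u ∧ ¬EndsInZero u ∧ 0 < a ∧
      b + 1 = q * a ∧ u.length + a + b = n ∧ w = u ++ replicate a false ++ replicate b true := by
  rw [mem_blockedWords]
  constructor
  · rintro ⟨⟨rfl, hw⟩, hb⟩
    obtain ⟨u, a, b, hu, hu0, ha, hab, rfl⟩ := hw.not_append_true_iff.1 hb
    exact ⟨u, a, b, hu, hu0, ha, hab, by simp [add_assoc], rfl⟩
  · rintro ⟨u, a, b, hu, hu0, ha, hab, rfl, rfl⟩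
    have hw : QDecreasing q (u ++ replicate a false ++ replicate b true) :=
      (QDecreasing.block_iff hu0 ha).2 ⟨hu, by omega⟩
    exact ⟨⟨by simp [add_assoc], hw⟩, hw.not_append_true_iff.2 ⟨u, a, b, hu, hu0, ha, hab, rfl⟩⟩

theorem blockedWords_subset : blockedWords q n ⊆ qdecWords q n := by
  intro w hw
  exact mem_qdecWords.2 (mem_blockedWords.1 hw).1

theorem blockedWords_eq_empty_of_lt (hn : n < q) : blockedWords q n = ∅ := by
  ext w
  simp only [mem_blockedWords_iff, Finset.notMem_empty, iff_false]
  rintro ⟨u, a, b, -, -, ha, hab, hlen, -⟩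
  have : q * 1 ≤ q * a := Nat.mul_le_mul_left q ha
  omega

theorem blockedWords_self (hq : 1 ≤ q) :
    blockedWords q q = {false :: replicate (q - 1) true} := by
  ext w
  rw [mem_blockedWords_iff, Finset.mem_singleton]
  constructor
  · rintro ⟨u, a, b, -, -, ha, hab, hlen, rfl⟩
    obtain rfl : a = 1 := by
      by_contra ha1
      have : q * 2 ≤ q * a := Nat.mul_le_mul_left q (by omega)
      omega
    obtain rfl : u = [] := length_eq_zero_iff.1 (by omega)
    obtain rfl : b = q - 1 := by omega
    rfl
  · rintro rfl
    exact ⟨[], 1, q - 1, .ones 0, not_endsInZero_replicate_true 0, one_pos, by omega,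
      by simp; omega, rfl⟩

theorem grow_mem_blockedWords (hq : 1 ≤ q) (hw : w ∈ qdecWords q n) :
    grow q w ∈ blockedWords q (n + q + 1) := by
  obtain ⟨hlen, hw⟩ := mem_qdecWords.1 hw
  rw [mem_blockedWords_iff]
  by_cases hext : QDecreasing q (w ++ [true])
  · exact ⟨w ++ [true], 1, q - 1, hext, not_endsInZero_append_true w, one_pos, by omega,
      by simp; omega, grow_of_extendable hext⟩
  · obtain ⟨u, a, b, hu, hu0, ha, hab, rfl⟩ := hw.not_append_true_iff.1 hext
    exact ⟨u, a + 1, b + q, hu, hu0, by omega, by rw [mul_add_one]; omega, by simp at hlen; omega,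
      grow_of_blocked ha hext⟩

theorem grow_injOn : Set.InjOn (grow q) {w | QDecreasing q w} := by
  intro w₁ (hw₁ : QDecreasing q w₁) w₂ (hw₂ : QDecreasing q w₂) he
  by_cases hext₁ : QDecreasing q (w₁ ++ [true]) <;> by_cases hext₂ : QDecreasing q (w₂ ++ [true])
  · rw [grow_of_extendable hext₁, grow_of_extendable hext₂] at he
    obtain ⟨he, -⟩ := block_inj (not_endsInZero_append_true w₁) (not_endsInZero_append_true w₂)
      one_pos one_pos he
    exact (append_inj' he rfl).1
  · obtain ⟨u, a, b, -, hu0, ha, -, rfl⟩ := hw₂.not_append_true_iff.1 hext₂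
    rw [grow_of_extendable hext₁, grow_of_blocked ha hext₂] at he
    have := (block_inj (not_endsInZero_append_true w₁) hu0 one_pos (by omega) he).2.1
    omega
  · obtain ⟨u, a, b, -, hu0, ha, -, rfl⟩ := hw₁.not_append_true_iff.1 hext₁
    rw [grow_of_blocked ha hext₁, grow_of_extendable hext₂] at he
    have := (block_inj hu0 (not_endsInZero_append_true w₂) (by omega) one_pos he).2.1
    omega
  · obtain ⟨u₁, a₁, b₁, -, hu₁, ha₁, -, rfl⟩ := hw₁.not_append_true_iff.1 hext₁
    obtain ⟨u₂, a₂, b₂, -, hu₂, ha₂, -, rfl⟩ := hw₂.not_append_true_iff.1 hext₂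
    rw [grow_of_blocked ha₁ hext₁, grow_of_blocked ha₂ hext₂] at he
    obtain ⟨rfl, ha, hb⟩ := block_inj hu₁ hu₂ (by omega) (by omega) he
    obtain rfl : a₁ = a₂ := by omega
    obtain rfl : b₁ = b₂ := by omega
    rfl

theorem grow_surjOn (hq : 1 ≤ q) :
    Set.SurjOn (grow q) (qdecWords q n) (blockedWords q (n + q + 1)) := by
  intro W hW
  obtain ⟨u, a, b, hu, hu0, ha, hab, hlen, rfl⟩ := mem_blockedWords_iff.1 (Finset.mem_coe.1 hW)
  rcases Nat.lt_or_ge 1 a with ha1 | ha1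
  · -- shorten the last block `0^a 1^b` to `0^(a-1) 1^(b-q)`
    obtain ⟨a, rfl⟩ : ∃ k, a = k + 1 := ⟨a - 1, by omega⟩
    have hqa : q * 1 ≤ q * a := Nat.mul_le_mul_left q (by omega)
    rw [mul_add_one] at hab
    have hw : u ++ replicate a false ++ replicate (b - q) true ∈ blockedWords q n :=
      mem_blockedWords_iff.2 ⟨u, a, b - q, hu, hu0, by omega, by omega, by omega, rfl⟩
    refine ⟨_, blockedWords_subset hw, ?_⟩
    rw [grow_of_blocked (by omega) (mem_blockedWords.1 hw).2, Nat.sub_add_cancel (by omega)]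
  · -- the last block is `0 1^(q-1)`, preceded by `u = v 1`
    obtain rfl : a = 1 := by omega
    obtain ⟨v, x, rfl⟩ := (eq_nil_or_concat' u).resolve_left (ne_nil_of_length_pos (by omega))
    obtain rfl : x = true := by simpa [EndsInZero] using hu0
    refine ⟨v, mem_qdecWords.2 ⟨by simp at hlen; omega, hu.of_append_singleton hq⟩, ?_⟩
    rw [grow_of_extendable hu]
    congr 2
    omega

theorem sum_blockedWords {M : Type*} [AddCommMonoid M] (hq : 1 ≤ q) (φ : List Bool → M) :
    ∑ w ∈ blockedWords q (n + q + 1), φ w = ∑ w ∈ qdecWords q n, φ (grow q w) :=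
  (Finset.sum_nbij (grow q) (fun _ => grow_mem_blockedWords hq)
    (grow_injOn.mono fun _ hw => (mem_qdecWords.1 hw).2) (grow_surjOn hq) fun _ _ => rfl).symm

theorem sum_qdecWords_succ_add {M : Type*} [AddCommMonoid M] (hq : 1 ≤ q) (φ : List Bool → M) :
    ∑ w ∈ qdecWords q (n + 1), φ w + ∑ w ∈ blockedWords q n, φ (w ++ [true]) =
      ∑ w ∈ qdecWords q n, φ (w ++ [false]) + ∑ w ∈ qdecWords q n, φ (w ++ [true]) := by
  classical
  set E := {w ∈ qdecWords q n | QDecreasing q (w ++ [true])}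
  have hsplit : qdecWords q (n + 1) =
      (qdecWords q n).image (· ++ [false]) ∪ E.image (· ++ [true]) := by
    ext w
    simp only [Finset.mem_union, Finset.mem_image, mem_qdecWords, Finset.mem_filter, E]
    constructor
    · rintro ⟨hlen, hw⟩
      obtain ⟨v, x, rfl⟩ := (eq_nil_or_concat' w).resolve_left (ne_nil_of_length_pos (by omega))
      have hv : v.length = n := by simpa using hlen
      cases x
      · exact .inl ⟨v, ⟨hv, hw.of_append_singleton hq⟩, rfl⟩
      · exact .inr ⟨v, ⟨⟨hv, hw.of_append_singleton hq⟩, hw⟩, rfl⟩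
    · rintro (⟨v, ⟨hlen, hv⟩, rfl⟩ | ⟨v, ⟨⟨hlen, -⟩, hv⟩, rfl⟩)
      · exact ⟨by simp [hlen], hv.append_false hq⟩
      · exact ⟨by simp [hlen], hv⟩
  have hdisj : Disjoint ((qdecWords q n).image (· ++ [false])) (E.image (· ++ [true])) := by
    simp only [Finset.disjoint_left, Finset.mem_image]
    rintro _ ⟨v, -, rfl⟩ ⟨v', -, h⟩
    simpa using (append_inj' h rfl).2
  rw [hsplit, Finset.sum_union hdisj, Finset.sum_image (append_left_injective _).injOn,
    Finset.sum_image (append_left_injective _).injOn, add_assoc, blockedWords,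
    Finset.sum_filter_add_sum_filter_not]

theorem qdecPopularity_eq_sum (b : Bool) :
    qdecPopularity q b n = ∑ w ∈ qdecWords q n, w.count b := by
  have hmem (p : List Bool × ℕ) : (p.1.length = n ∧ QDecreasing q p.1 ∧ p.1[p.2]? = some b) ↔
      p ∈ {p ∈ qdecWords q n ×ˢ Finset.range n | p.1[p.2]? = some b} := by
    simp only [Finset.mem_filter, Finset.mem_product, mem_qdecWords, Finset.mem_range]
    constructor
    · rintro ⟨rfl, hw, hb⟩
      exact ⟨⟨⟨rfl, hw⟩, (List.getElem?_eq_some_iff.1 hb).1⟩, hb⟩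
    · rintro ⟨⟨⟨rfl, hw⟩, -⟩, hb⟩
      exact ⟨rfl, hw, hb⟩
  rw [qdecPopularity, Nat.card_congr (Equiv.subtypeEquivRight hmem), Nat.card_eq_finsetCard,
    Finset.card_filter, Finset.sum_product]
  refine Finset.sum_congr rfl fun w hw => ?_
  rw [← Finset.card_filter, ← (mem_qdecWords.1 hw).1, card_filter_getElem?_eq_count]

end Counting

open PowerSeries

noncomputable def wordSeries (S : ℕ → Finset (List Bool)) (φ : List Bool → ℤ) : ℤ⟦X⟧ :=
  mk fun n => ∑ w ∈ S n, φ w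

section Series

variable {q : ℕ}

theorem wordSeries_add_const (S : ℕ → Finset (List Bool)) (φ : List Bool → ℤ) (c : ℤ) :
    wordSeries S (fun w => φ w + c) = wordSeries S φ + C c * wordSeries S 1 := by
  ext n
  simp only [wordSeries, map_add, coeff_C_mul, coeff_mk, Finset.sum_add_distrib, Pi.one_apply,
    Finset.mul_sum, mul_one]

theorem wordSeries_qdecWords (hq : 1 ≤ q) (φ : List Bool → ℤ) :
    wordSeries (qdecWords q) φ + X * wordSeries (blockedWords q) (φ ∘ (· ++ [true])) =
      C (φ []) + X * (wordSeries (qdecWords q) (φ ∘ (· ++ [false])) +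
        wordSeries (qdecWords q) (φ ∘ (· ++ [true]))) := by
  ext n
  rcases n with _ | n
  · simp [wordSeries, qdecWords_zero]
  · simp only [wordSeries, map_add, coeff_succ_X_mul, coeff_mk, coeff_C, Nat.succ_ne_zero,
      if_false, zero_add]
    exact sum_qdecWords_succ_add hq φ

theorem wordSeries_blockedWords (hq : 1 ≤ q) (φ : List Bool → ℤ) :
    wordSeries (blockedWords q) φ = C (φ (false :: replicate (q - 1) true)) * X ^ q
      + X ^ (q + 1) * wordSeries (qdecWords q) (φ ∘ grow q) := by
  ext n
  simp only [wordSeries, map_add, coeff_C_mul_X_pow, coeff_X_pow_mul', coeff_mk]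
  rcases lt_trichotomy n q with hn | rfl | hn
  · rw [blockedWords_eq_empty_of_lt hn, if_neg hn.ne, if_neg (by omega)]
    simp
  · simp [blockedWords_self hq]
  · obtain ⟨m, rfl⟩ : ∃ m, n = m + q + 1 := ⟨n - q - 1, by omega⟩
    rw [if_neg (by omega), if_pos (by omega), zero_add, sum_blockedWords hq,
      show m + q + 1 - (q + 1) = m by omega]
    rfl

theorem wordSeries_one_qdecWords (hq : 1 ≤ q) :
    wordSeries (qdecWords q) 1 + X * wordSeries (blockedWords q) 1 =
      1 + 2 * X * wordSeries (qdecWords q) 1 := by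
  have h := wordSeries_qdecWords hq 1
  simp only [Pi.one_comp, Pi.one_apply, map_one] at h
  linear_combination h

theorem wordSeries_one_blockedWords (hq : 1 ≤ q) :
    wordSeries (blockedWords q) 1 = X ^ q + X ^ (q + 1) * wordSeries (qdecWords q) 1 := by
  have h := wordSeries_blockedWords hq 1
  simp only [Pi.one_comp, Pi.one_apply, map_one, one_mul] at h
  exact h

theorem wordSeries_count_qdecWords (hq : 1 ≤ q) :
    wordSeries (qdecWords q) (fun w => (w.count true : ℤ)) +
        X * (wordSeries (blockedWords q) (fun w => (w.count true : ℤ)) +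
          wordSeries (blockedWords q) 1) =
      X * (2 * wordSeries (qdecWords q) (fun w => (w.count true : ℤ)) +
        wordSeries (qdecWords q) 1) := by
  have h := wordSeries_qdecWords hq fun w => (w.count true : ℤ)
  simp only [Function.comp_def, count_append, count_singleton', count_nil, if_true, if_false,
    Bool.false_eq_true, Nat.cast_add, Nat.cast_one, add_zero, Nat.cast_zero, map_zero, zero_add,
    wordSeries_add_const, map_one, one_mul] at h
  linear_combination h

theorem wordSeries_count_blockedWords (hq : 1 ≤ q) :
    wordSeries (blockedWords q) (fun w => (w.count true : ℤ)) =
      ((q : ℤ⟦X⟧) - 1) * X ^ q + X ^ (q + 1) *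
        (wordSeries (qdecWords q) (fun w => (w.count true : ℤ)) +
          (q : ℤ⟦X⟧) * wordSeries (qdecWords q) 1) := by
  have h := wordSeries_blockedWords hq fun w => (w.count true : ℤ)
  simp only [Function.comp_def, count_grow hq, Nat.cast_add, wordSeries_add_const, map_natCast] at h
  rw [h, show (false :: replicate (q - 1) true).count true = q - 1 by simp, Nat.cast_sub hq,
    Nat.cast_one]

end Series

theorem qdecreasing_popularity_one_gf (q : ℕ) (hq : 1 ≤ q) :
    PowerSeries.mk (fun n => (qdecPopularity q true n : ℤ)) *
      (1 - 2 * PowerSeries.X + PowerSeries.X ^ (q + 2)) ^ 2 =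
    PowerSeries.X *
      (1 - (q : PowerSeries ℤ) * PowerSeries.X ^ q
         + (q : PowerSeries ℤ) * PowerSeries.X ^ (q + 1)
         - 2 * PowerSeries.X ^ (q + 1) + PowerSeries.X ^ (2 * q + 2)) := by
  have hP : PowerSeries.mk (fun n => (qdecPopularity q true n : ℤ)) =
      wordSeries (qdecWords q) (fun w => (w.count true : ℤ)) := by
    ext n
    simp [wordSeries, qdecPopularity_eq_sum]
  rw [hP]
  set F := wordSeries (qdecWords q) 1
  set P := wordSeries (qdecWords q) (fun w => (w.count true : ℤ))
  have hF : F * (1 - 2 * X + X ^ (q + 2)) = 1 - X ^ (q + 1) := by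
    linear_combination wordSeries_one_qdecWords hq - X * wordSeries_one_blockedWords hq
  have hPF : P * (1 - 2 * X + X ^ (q + 2)) =
      X * F * (1 - ((q : ℤ⟦X⟧) + 1) * X ^ (q + 1)) - (q : ℤ⟦X⟧) * X ^ (q + 1) := by
    linear_combination wordSeries_count_qdecWords hq - X * wordSeries_count_blockedWords hq
      - X * wordSeries_one_blockedWords hq
  linear_combination (1 - 2 * X + X ^ (q + 2)) * hPF
    + X * (1 - ((q : ℤ⟦X⟧) + 1) * X ^ (q + 1)) * hF
end
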